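/- Let p, q ≥ 0 with p + q = 6, let ⟨·,·⟩ be the standard Hermitian form of signature (p,q) on ℂ⁶ (linear in the first argument, with ⟨v,w⟩ = Σ_{i≤p} vᵢ w̄ᵢ − Σ_{i>p} vᵢ w̄ᵢ), let γ be the induced Hermitian form on Λ³ℂ⁶ determined by γ(v₁∧v₂∧v₃, w₁∧w₂∧w₃) = det(⟨vᵢ,wⱼ⟩), let ν = e₁∧⋯∧e₆ for the standard basis, let Ω be the symplectic form on Λ³ℂ⁶ with v∧w = Ω(v,w)·ν, and let τ : Λ³ℂ⁶ → Λ³ℂ⁶ be the unique map satisfying γ(x,y) = i·Ω(x, τy) for all x, y. Then τ is antilinear, and τ∘τ = id if and only if p − q ≡ 0 (mod 4) (i.e., (p,q) ∈ {(5,1),(3,3),(1,5)}), while τ∘τ = −id otherwise (so τ is a real structure in the first case and a quaternionic structure in the second). Moreover, when p − q ≡ 0 (mod 4), the Hermitian form γ on Λ³ℂ⁶ has signature (10,10). -/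

import Mathlib

/-!
In the basis `e_S = ⋀_{i ∈ S} e_i` of `Λ³ℂ⁶`, indexed by the 3-subsets `S` of `Fin 6`, the form
`γ` is diagonal with `γ(e_S, e_S) = ε_S`, the product of the signs `⟨e_i, e_i⟩` for `i ∈ S`, while
`Ω` pairs `e_S` only with `e_{Sᶜ}`, with a sign `g_S` satisfying `g_{Sᶜ} = -g_S` because
three-vectors anticommute. Hence `τ e_S = -i ε_S g_S e_{Sᶜ}`, `τ` is antilinear because `Ω` is
nondegenerate, and `τ² e_S = ε_S ε_{Sᶜ} g_S g_{Sᶜ} e_S = -(-1)^q e_S`. When `q` is odd,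
`ε_{Sᶜ} = -ε_S`, so complementation exchanges the basis vectors with `ε = 1` and `ε = -1`;
each kind spans a 10-dimensional subspace on which `γ` is definite.
-/

noncomputable section

namespace Stmt15

abbrev A := ExteriorAlgebra ℂ (Fin 6 → ℂ)

/-- The third exterior power `Λ³ℂ⁶`. -/
abbrev W : Submodule ℂ A := ⋀[ℂ]^3 (Fin 6 → ℂ)

/-- The basis vectors `eᵢ` of `ℂ⁶` inside the exterior algebra. -/
def e (i : Fin 6) : A := ExteriorAlgebra.ι ℂ (Pi.single i (1 : ℂ))

/-- `ν = e₁∧e₂∧e₃∧e₄∧e₅∧e₆`. -/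
def ν : A := e 0 * e 1 * e 2 * e 3 * e 4 * e 5

/-- The standard Hermitian form of signature `(p,q)` on `ℂ⁶`,
`⟨v,w⟩ = Σ_{i<p} vᵢw̄ᵢ − Σ_{i≥p} vᵢw̄ᵢ` (0-indexed). -/
def h (p : ℕ) (v w : Fin 6 → ℂ) : ℂ :=
  ∑ i : Fin 6, (if (i : ℕ) < p then (1 : ℂ) else -1) * v i * (starRingEnd ℂ) (w i)

end Stmt15

open Module Set.powersetCard ExteriorAlgebra
open Set (powersetCard)

def bilinOfMulEqSmul {K E : Type*} [Field K] [Ring E] [Algebra K E] {V : Submodule K E}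
    {ν : E} (hν : ν ≠ 0) (Ω : V → V → K)
    (hΩ : ∀ x y : V, (x : E) * y = Ω x y • ν) : V →ₗ[K] V →ₗ[K] K :=
  have cancel := smul_left_injective K hν
  LinearMap.mk₂ K Ω
    (fun x x' y => cancel <| by simp only [add_smul, ← hΩ, Submodule.coe_add, add_mul])
    (fun c x y => cancel <| by simp only [smul_eq_mul, ← smul_smul, ← hΩ, Submodule.coe_smul,
      smul_mul_assoc])
    (fun x y y' => cancel <| by simp only [add_smul, ← hΩ, Submodule.coe_add, mul_add])
    (fun c x y => cancel <| by simp only [smul_eq_mul, ← smul_smul, ← hΩ, Submodule.coe_smul,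
      mul_smul_comm])

def sesqOfHermitian {R M : Type*} [CommSemiring R] [StarRing R] [AddCommMonoid M] [Module R M]
    (γ : M → M → R) (hadd : ∀ x x' y, γ (x + x') y = γ x y + γ x' y)
    (hsmul : ∀ (c : R) x y, γ (c • x) y = c * γ x y)
    (hherm : ∀ x y, γ y x = starRingEnd R (γ x y)) : M →ₗ[R] M →ₗ⋆[R] R :=
  LinearMap.mk₂'ₛₗ (RingHom.id R) (starRingEnd R) γ hadd hsmul
    (fun x y y' => by rw [hherm, hadd, map_add, ← hherm, ← hherm])
    (fun c x y => by rw [hherm, hsmul, map_mul, ← hherm, smul_eq_mul])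

def antilinearOfPairing {K M : Type*} [Field K] [StarRing K] [AddCommGroup M] [Module K M]
    (Ω : M →ₗ[K] M →ₗ[K] K) (hΩ : Function.Injective Ω.flip)
    (γ : M →ₗ[K] M →ₗ⋆[K] K) (a : K) (ha : a ≠ 0) (τ : M → M)
    (hτ : ∀ x y, γ x y = a * Ω x (τ y)) : M →ₗ⋆[K] M where
  toFun := τ
  map_add' y y' := hΩ <| LinearMap.ext fun x => mul_left_cancel₀ ha <| by
    rw [LinearMap.flip_apply, LinearMap.flip_apply, ← hτ, map_add (Ω x), mul_add, ← hτ, ← hτ,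
      map_add]
  map_smul' c y := hΩ <| LinearMap.ext fun x => mul_left_cancel₀ ha <| by
    rw [LinearMap.flip_apply, LinearMap.flip_apply, ← hτ, LinearMap.map_smul (Ω x), smul_eq_mul,
      mul_left_comm, ← hτ, LinearMap.map_smulₛₗ, smul_eq_mul]

lemma flip_injective_of_apply_basis {K M ι : Type*} [Field K] [AddCommGroup M] [Module K M]
    [Fintype ι] [DecidableEq ι] (B : Basis ι K M) (Ω : M →ₗ[K] M →ₗ[K] K) (σ : ι ≃ ι)
    (c : ι → K) (hc : ∀ i, c i ≠ 0) (hΩ : ∀ i j, Ω (B i) (B j) = if j = σ i then c i else 0) :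
    Function.Injective Ω.flip := by
  rw [← LinearMap.ker_eq_bot, LinearMap.ker_eq_bot']
  intro y hy
  refine B.ext_elem fun j => ?_
  have hpair : Ω (B (σ.symm j)) y = 0 := LinearMap.congr_fun hy _
  rw [← B.sum_repr y, map_sum] at hpair
  simp only [map_smul, hΩ, smul_eq_mul, mul_ite, mul_zero, Equiv.apply_symm_apply,
    Finset.sum_ite_eq', Finset.mem_univ, if_true] at hpair
  simpa using (mul_eq_zero.1 hpair).resolve_right (hc _)

lemma finrank_span_basis_image {K M ι : Type*} [Field K] [AddCommGroup M] [Module K M]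
    (B : Basis ι K M) (J : Finset ι) :
    finrank K (Submodule.span K (B '' J)) = J.card := by
  rw [Set.image_eq_range, finrank_span_eq_card (b := fun j : (J : Set ι) => B j)
    (B.linearIndependent.comp _ Subtype.val_injective)]
  simp

lemma re_apply_self_pos_of_mem_span {M ι : Type*} [AddCommGroup M] [Module ℂ M] [Fintype ι]
    [DecidableEq ι] (B : Basis ι ℂ M) (γ : M →ₗ[ℂ] M →ₗ⋆[ℂ] ℂ) (d : ι → ℝ)
    (hγ : ∀ i j, γ (B i) (B j) = if i = j then (d i : ℂ) else 0) {J : Set ι}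
    (hJ : ∀ i ∈ J, 0 < d i) {x : M} (hx : x ∈ Submodule.span ℂ (B '' J)) (hx0 : x ≠ 0) :
    0 < (γ x x).re := by
  have hexpand : γ x x = ∑ i, ((Complex.normSq (B.repr x i) * d i : ℝ) : ℂ) := by
    conv_lhs => rw [← B.sum_repr x]
    simp only [map_sum, LinearMap.map_smulₛₗ, RingHom.id_apply, LinearMap.coe_sum,
      Finset.sum_apply, LinearMap.smul_apply, hγ, smul_eq_mul, mul_ite, mul_zero,
      Finset.sum_ite_eq', Finset.mem_univ, if_true]
    refine Finset.sum_congr rfl fun i _ => ?_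
    rw [Complex.ofReal_mul, Complex.normSq_eq_conj_mul_self]
    ring
  have hsupp := (B.mem_span_image).1 hx
  have hnonneg : ∀ i, 0 ≤ Complex.normSq (B.repr x i) * d i := fun i => by
    by_cases hi : B.repr x i = 0
    · simp [hi]
    · exact mul_nonneg (Complex.normSq_nonneg _) (hJ i (hsupp (Finsupp.mem_support_iff.2 hi))).le
  obtain ⟨i, hi⟩ : ∃ i, B.repr x i ≠ 0 := by
    by_contra! h
    exact hx0 (B.repr.injective (Finsupp.ext fun i => by simp [h]))
  rw [hexpand, ← Complex.ofReal_sum, Complex.ofReal_re]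
  refine Finset.sum_pos' (fun i _ => hnonneg i) ⟨i, Finset.mem_univ i, ?_⟩
  exact mul_pos (Complex.normSq_pos.2 hi) (hJ i (hsupp (Finsupp.mem_support_iff.2 hi)))

lemma det_gram_of_orthogonal {R M I : Type*} [CommRing R] [LinearOrder I] {n : ℕ}
    (f : M → M → R) (v : I → M) (η : I → R)
    (hf : ∀ a b, f (v a) (v b) = if a = b then η a else 0) (s t : powersetCard I n) :
    (Matrix.of fun i j => f (v (ofFinEmbEquiv.symm s i)) (v (ofFinEmbEquiv.symm t j))).det
      = if s = t then ∏ a ∈ s.val, η a else 0 := by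
  split_ifs with hst
  · subst hst
    have hdiag : (Matrix.of fun i j => f (v (ofFinEmbEquiv.symm s i)) (v (ofFinEmbEquiv.symm s j)))
        = Matrix.diagonal (fun i => η (ofFinEmbEquiv.symm s i)) := by
      ext i j
      simp [hf, Matrix.diagonal_apply, (ofFinEmbEquiv.symm s).injective.eq_iff]
    rw [hdiag, Matrix.det_diagonal]
    conv_rhs => rw [← Finset.map_orderEmbOfFin_univ s.val s.prop, Finset.prod_map]
    rfl
  · obtain ⟨a, has, hat⟩ := (exists_mem_notMem_iff_ne s t).1 hst
    obtain ⟨i, rfl⟩ := (mem_range_ofFinEmbEquiv_symm_iff_mem s a).2 has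
    refine Matrix.det_eq_zero_of_row_eq_zero i fun j => ?_
    rw [Matrix.of_apply, hf, if_neg]
    rintro heq
    exact hat (heq ▸ (mem_range_ofFinEmbEquiv_symm_iff_mem t _).1 ⟨j, rfl⟩)

lemma ιMulti_three_mul_comm {R M : Type*} [CommRing R] [AddCommGroup M] [Module R M]
    (a b : Fin 3 → M) : ιMulti R 3 b * ιMulti R 3 a = -(ιMulti R 3 a * ιMulti R 3 b) := by
  have hswap : Fin.append b a = Fin.append a b ∘ Equiv.addRight (3 : Fin 6) := by
    funext i; fin_cases i <;> rfl
  have hsign : Equiv.Perm.sign (Equiv.addRight (3 : Fin 6)) = -1 := by decide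
  rw [ιMulti_mul_ιMulti, ιMulti_mul_ιMulti, hswap, AlternatingMap.map_perm, hsign, Units.neg_smul,
    one_smul]

lemma intCast_units_mul_self {R : Type*} [Ring R] (u : ℤˣ) : ((u : ℤ) : R) * ((u : ℤ) : R) = 1 := by
  rw [← Int.cast_mul, ← Units.val_mul, Int.units_mul_self, Units.val_one, Int.cast_one]

namespace Stmt15

def wedgeBasis : Basis (powersetCard (Fin 6) 3) ℂ W := (Pi.basisFun ℂ (Fin 6)).exteriorPower 3

abbrev tripleCompl : powersetCard (Fin 6) 3 ≃ powersetCard (Fin 6) 3 := Set.powersetCard.compl rfl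

-- `(Set.powersetCard.compl h).symm` is `Set.powersetCard.compl h'` by definition.
lemma tripleCompl_tripleCompl (s : powersetCard (Fin 6) 3) : tripleCompl (tripleCompl s) = s :=
  tripleCompl.symm_apply_apply s

lemma coe_wedgeBasis (s : powersetCard (Fin 6) 3) :
    (wedgeBasis s : A) = ιMulti ℂ 3 (fun i => Pi.single (ofFinEmbEquiv.symm s i) 1) := by
  simp [wedgeBasis, exteriorPower.basis_apply, Function.comp_def]

lemma ιMulti_family_eq_ν (u : powersetCard (Fin 6) 6) :
    ExteriorAlgebra.ιMulti_family ℂ 6 (Pi.basisFun ℂ (Fin 6)) u = ν := by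
  have hu : u.val = Finset.univ := Finset.eq_univ_of_card _ u.prop
  have hid : ⇑(ofFinEmbEquiv.symm u) = id :=
    (Finset.orderEmbOfFin_unique u.prop (fun i => hu ▸ Finset.mem_univ i) strictMono_id).symm
  simp only [ExteriorAlgebra.ιMulti_family, hid, Function.comp_id, Pi.basisFun_apply, ιMulti_apply,
    List.ofFn_succ, List.ofFn_zero, List.prod_cons, List.prod_nil, mul_one, ν, e, mul_assoc]
  rfl

lemma ν_ne_zero : ν ≠ 0 := by
  let u : powersetCard (Fin 6) 6 := ofCard (s := Finset.univ) rfl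
  rw [← ιMulti_family_eq_ν u, ← exteriorPower.ιMulti_family_apply_coe,
    ← exteriorPower.basis_apply, ne_eq, Submodule.coe_eq_zero]
  exact Basis.ne_zero _ u

def wedgeSign (s : powersetCard (Fin 6) 3) : ℤˣ :=
  Equiv.Perm.sign <|
    permOfDisjoint (show Disjoint s.val (tripleCompl s).val from disjoint_compl_right)

lemma coe_wedgeBasis_mul_compl (s : powersetCard (Fin 6) 3) :
    (wedgeBasis s : A) * wedgeBasis (tripleCompl s) = ((wedgeSign s : ℤ) : ℂ) • ν := by
  simp only [wedgeBasis, exteriorPower.basis_apply, exteriorPower.ιMulti_family_apply_coe]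
  rw [ιMulti_family_mul_of_disjoint _ _ _ _ disjoint_compl_right, ιMulti_family_eq_ν, wedgeSign,
    Units.smul_def, Int.cast_smul_eq_zsmul]

lemma coe_wedgeBasis_mul_of_ne_compl {s t : powersetCard (Fin 6) 3} (h : t ≠ tripleCompl s) :
    (wedgeBasis s : A) * wedgeBasis t = 0 := by
  simp only [wedgeBasis, exteriorPower.basis_apply, exteriorPower.ιMulti_family_apply_coe]
  refine ιMulti_family_mul_of_not_disjoint _ _ _ _ fun hst => h ?_
  exact eq_iff_subset.2 (Finset.subset_compl_iff_disjoint_left.2 hst)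

lemma wedgeSign_tripleCompl (s : powersetCard (Fin 6) 3) :
    wedgeSign (tripleCompl s) = -wedgeSign s := by
  have hcomm := ιMulti_three_mul_comm (R := ℂ) (M := Fin 6 → ℂ)
    (fun i => Pi.single (ofFinEmbEquiv.symm s i) (1 : ℂ))
    (fun i => Pi.single (ofFinEmbEquiv.symm (tripleCompl s) i) (1 : ℂ))
  have hback : (wedgeBasis (tripleCompl s) : A) * wedgeBasis s =
      ((wedgeSign (tripleCompl s) : ℤ) : ℂ) • ν := by
    simpa only [tripleCompl_tripleCompl] using coe_wedgeBasis_mul_compl (tripleCompl s)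
  rw [← coe_wedgeBasis, ← coe_wedgeBasis, coe_wedgeBasis_mul_compl, hback, ← neg_smul] at hcomm
  have := smul_left_injective ℂ ν_ne_zero hcomm
  exact Units.val_injective (Int.cast_injective (α := ℂ) (by push_cast; exact this))

lemma pairing_wedgeBasis {Ω : W → W → ℂ} (hΩ : ∀ x y : W, (x : A) * y = Ω x y • ν)
    (s t : powersetCard (Fin 6) 3) :
    Ω (wedgeBasis s) (wedgeBasis t) = if t = tripleCompl s then ((wedgeSign s : ℤ) : ℂ) else 0 := by
  refine smul_left_injective ℂ ν_ne_zero ?_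
  split_ifs with ht
  · simp only [← hΩ, ht, coe_wedgeBasis_mul_compl]
  · simp only [← hΩ, coe_wedgeBasis_mul_of_ne_compl ht, zero_smul]

def signAt (p : ℕ) (i : Fin 6) : ℤˣ := if (i : ℕ) < p then 1 else -1

def tripleSign (p : ℕ) (s : powersetCard (Fin 6) 3) : ℤˣ := ∏ i ∈ s.val, signAt p i

lemma h_single (p : ℕ) (i j : Fin 6) :
    h p (Pi.single i 1) (Pi.single j 1) = if i = j then ((signAt p i : ℤ) : ℂ) else 0 := by
  rw [h, Finset.sum_eq_single i (fun k _ hk => by simp [hk]) (by simp)]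
  by_cases hij : i = j
  · subst hij; by_cases hi : (i : ℕ) < p <;> simp [signAt, hi]
  · simp [hij]

lemma gram_wedgeBasis {p : ℕ} {γ : W → W → ℂ}
    (hγ : ∀ (v w : Fin 3 → (Fin 6 → ℂ)) (x y : W), (x : A) = ιMulti ℂ 3 v →
      (y : A) = ιMulti ℂ 3 w → γ x y = Matrix.det (Matrix.of fun i j => h p (v i) (w j)))
    (s t : powersetCard (Fin 6) 3) :
    γ (wedgeBasis s) (wedgeBasis t) = if s = t then ((tripleSign p s : ℤ) : ℂ) else 0 := by
  rw [hγ _ _ _ _ (coe_wedgeBasis s) (coe_wedgeBasis t),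
    det_gram_of_orthogonal (fun v w => h p v w) (fun i => Pi.single i 1) _ (h_single p)]
  push_cast [tripleSign]
  rfl

lemma prod_signAt {p q : ℕ} (hpq : p + q = 6) : ∏ i, signAt p i = (-1) ^ q := by
  obtain rfl : q = 6 - p := by omega
  have hp : p ≤ 6 := by omega
  interval_cases p <;> decide

lemma tripleSign_mul_tripleCompl {p q : ℕ} (hpq : p + q = 6) (s : powersetCard (Fin 6) 3) :
    tripleSign p s * tripleSign p (tripleCompl s) = (-1) ^ q :=
  (Finset.prod_mul_prod_compl _ _).trans (prod_signAt hpq)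

section Conjugation

variable {p : ℕ} {Ω : W →ₗ[ℂ] W →ₗ[ℂ] ℂ} {γ : W →ₗ[ℂ] W →ₗ⋆[ℂ] ℂ} {τ : W →ₗ⋆[ℂ] W}

lemma flip_injective_of_pairing_wedgeBasis
    (hΩ : ∀ s t, Ω (wedgeBasis s) (wedgeBasis t) =
      if t = tripleCompl s then ((wedgeSign s : ℤ) : ℂ) else 0) :
    Function.Injective Ω.flip :=
  flip_injective_of_apply_basis wedgeBasis Ω tripleCompl _ (fun s => by simp) hΩ

lemma apply_wedgeBasis_of_pairing
    (hΩ : ∀ s t, Ω (wedgeBasis s) (wedgeBasis t) =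
      if t = tripleCompl s then ((wedgeSign s : ℤ) : ℂ) else 0)
    (hγ : ∀ s t, γ (wedgeBasis s) (wedgeBasis t) =
      if s = t then ((tripleSign p s : ℤ) : ℂ) else 0)
    (hτ : ∀ x y, γ x y = Complex.I * Ω x (τ y)) (s : powersetCard (Fin 6) 3) :
    τ (wedgeBasis s) = (-Complex.I * (tripleSign p s : ℤ) * (wedgeSign s : ℤ)) •
      wedgeBasis (tripleCompl s) := by
  refine flip_injective_of_pairing_wedgeBasis hΩ (wedgeBasis.ext fun t => ?_)
  have hΩτ : Ω (wedgeBasis t) (τ (wedgeBasis s)) =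
      -Complex.I * γ (wedgeBasis t) (wedgeBasis s) := by
    rw [hτ, ← mul_assoc, neg_mul, Complex.I_mul_I, neg_neg, one_mul]
  rw [LinearMap.flip_apply, LinearMap.flip_apply, hΩτ, map_smul, hΩ, hγ, smul_eq_mul]
  by_cases hts : t = s
  · subst hts
    simp only [if_true]
    linear_combination
      (Complex.I * (tripleSign p t : ℤ)) * intCast_units_mul_self (R := ℂ) (wedgeSign t)
  · simp [hts, Ne.symm hts]

lemma apply_apply_of_pairing {q : ℕ} (hpq : p + q = 6)
    (hΩ : ∀ s t, Ω (wedgeBasis s) (wedgeBasis t) =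
      if t = tripleCompl s then ((wedgeSign s : ℤ) : ℂ) else 0)
    (hγ : ∀ s t, γ (wedgeBasis s) (wedgeBasis t) =
      if s = t then ((tripleSign p s : ℤ) : ℂ) else 0)
    (hτ : ∀ x y, γ x y = Complex.I * Ω x (τ y)) (x : W) :
    τ (τ x) = ((-1 : ℂ) ^ (q + 1)) • x := by
  suffices τ.comp τ = ((-1 : ℂ) ^ (q + 1)) • LinearMap.id from LinearMap.congr_fun this x
  refine wedgeBasis.ext fun s => ?_
  have hε : ((tripleSign p s : ℤ) : ℂ) * (tripleSign p (tripleCompl s) : ℤ) = (-1) ^ q := by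
    have := congrArg (fun u : ℤˣ => ((u : ℤ) : ℂ)) (tripleSign_mul_tripleCompl hpq s)
    push_cast at this
    exact this
  rw [LinearMap.comp_apply, apply_wedgeBasis_of_pairing hΩ hγ hτ, map_smulₛₗ,
    apply_wedgeBasis_of_pairing hΩ hγ hτ, tripleCompl_tripleCompl, smul_smul,
    wedgeSign_tripleCompl, LinearMap.smul_apply, LinearMap.id_apply]
  congr 1
  simp only [map_mul, map_neg, Complex.conj_I, map_intCast, Units.val_neg, Int.cast_neg]
  linear_combination
    (((tripleSign p s : ℤ) : ℂ) * (tripleSign p (tripleCompl s) : ℤ) *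
        ((wedgeSign s : ℤ) : ℂ) * (wedgeSign s : ℤ)) * Complex.I_sq
      - ((tripleSign p s : ℤ) : ℂ) * (tripleSign p (tripleCompl s) : ℤ) *
        intCast_units_mul_self (R := ℂ) (wedgeSign s) - hε

end Conjugation

lemma tripleSign_tripleCompl {p q : ℕ} (hpq : p + q = 6) (hq : Odd q)
    (s : powersetCard (Fin 6) 3) : tripleSign p (tripleCompl s) = -tripleSign p s := by
  have hmul := tripleSign_mul_tripleCompl hpq s
  rw [hq.neg_one_pow] at hmul
  calc tripleSign p (tripleCompl s)
      = tripleSign p s * tripleSign p s * tripleSign p (tripleCompl s) := by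
        rw [Int.units_mul_self, one_mul]
    _ = -tripleSign p s := by rw [mul_assoc, hmul, mul_neg_one]

open Finset in
lemma card_tripleSign_eq_one_and_neg_one {p q : ℕ} (hpq : p + q = 6) (hq : Odd q) :
    #{s | tripleSign p s = 1} = 10 ∧ #{s | tripleSign p s = -1} = 10 := by
  have hswap : #{s | tripleSign p s = 1} = #{s | tripleSign p s = -1} := by
    refine Finset.card_nbij' tripleCompl tripleCompl ?_ ?_ ?_ ?_
    · intro s hs
      simp_all [tripleSign_tripleCompl hpq hq]
    · intro s hs
      simp_all [tripleSign_tripleCompl hpq hq]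
    · intro s _; exact tripleCompl_tripleCompl s
    · intro s _; exact tripleCompl_tripleCompl s
  have htotal : #{s | tripleSign p s = 1} + #{s | tripleSign p s = -1} = 20 := by
    have hneg : ∀ s, ¬ tripleSign p s = 1 ↔ tripleSign p s = -1 := fun s => by
      rcases Int.units_eq_one_or (tripleSign p s) with h | h <;> simp [h]
    simp_rw [← hneg]
    rw [Finset.card_filter_add_card_filter_not, Finset.card_univ,
      ← Nat.card_eq_fintype_card, Set.powersetCard.card, Nat.card_fin]
    rfl
  omega

open Finset in
lemma exists_signature_ten_ten {p q : ℕ} (hpq : p + q = 6) (hq : Odd q)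
    (γ : W →ₗ[ℂ] W →ₗ⋆[ℂ] ℂ)
    (hγ : ∀ s t, γ (wedgeBasis s) (wedgeBasis t) =
      if s = t then ((tripleSign p s : ℤ) : ℂ) else 0) :
    ∃ P N : Submodule ℂ W, finrank ℂ P = 10 ∧ finrank ℂ N = 10 ∧
      (∀ x : W, x ∈ P → x ≠ 0 → 0 < (γ x x).re) ∧
      (∀ x : W, x ∈ N → x ≠ 0 → (γ x x).re < 0) := by
  set d : powersetCard (Fin 6) 3 → ℝ := fun s => ((tripleSign p s : ℤ) : ℝ)
  have hγd : ∀ s t, γ (wedgeBasis s) (wedgeBasis t) = if s = t then (d s : ℂ) else 0 := by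
    simp [hγ, d]
  have hγd' : ∀ s t, (-γ) (wedgeBasis s) (wedgeBasis t) =
      if s = t then ((-d s : ℝ) : ℂ) else 0 := by
    intro s t; split_ifs with hst <;> simp [hγd, hst]
  obtain ⟨hcardPos, hcardNeg⟩ := card_tripleSign_eq_one_and_neg_one hpq hq
  refine ⟨Submodule.span ℂ (wedgeBasis '' ↑({s | tripleSign p s = 1} : Finset _)),
    Submodule.span ℂ (wedgeBasis '' ↑({s | tripleSign p s = -1} : Finset _)),
    by rw [finrank_span_basis_image, hcardPos], by rw [finrank_span_basis_image, hcardNeg],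
    fun x hx hx0 => ?_, fun x hx hx0 => ?_⟩
  · refine re_apply_self_pos_of_mem_span wedgeBasis γ d hγd (fun s hs => ?_) hx hx0
    simp_all [d]
  · have := re_apply_self_pos_of_mem_span wedgeBasis (-γ) (-d) hγd' (fun s hs => ?_) hx hx0
    · simpa using this
    · simp_all [d]

end Stmt15

open Stmt15 in
theorem stmt15 (p q : ℕ) (hpq : p + q = 6)
    (γ : W → W → ℂ)
    -- `γ` is Hermitian: linear in the first argument with conjugate symmetry
    (hγadd : ∀ x x' y : W, γ (x + x') y = γ x y + γ x' y)
    (hγsmul : ∀ (c : ℂ) (x y : W), γ (c • x) y = c * γ x y)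
    (hγherm : ∀ x y : W, γ y x = (starRingEnd ℂ) (γ x y))
    -- `γ` is induced by `⟨·,·⟩` via determinants on decomposable three-vectors
    (hγdet : ∀ (v w : Fin 3 → (Fin 6 → ℂ)) (x y : W),
      (x : A) = ExteriorAlgebra.ιMulti ℂ 3 v → (y : A) = ExteriorAlgebra.ιMulti ℂ 3 w →
      γ x y = Matrix.det (Matrix.of fun i j => h p (v i) (w j)))
    -- `Ω` is the symplectic form determined by `v ∧ w = Ω(v,w)·ν`
    (Ω : W → W → ℂ)
    (hΩ : ∀ x y : W, (x : A) * (y : A) = Ω x y • ν)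
    -- `τ` is determined by `γ(x,y) = i·Ω(x,τy)`
    (τ : W → W)
    (hτ : ∀ x y : W, γ x y = Complex.I * Ω x (τ y)) :
    -- `τ` is antilinear
    ((∀ x y : W, τ (x + y) = τ x + τ y) ∧
     (∀ (c : ℂ) (x : W), τ (c • x) = (starRingEnd ℂ) c • τ x)) ∧
    -- `τ∘τ = id` iff `p − q ≡ 0 (mod 4)` (real structure), `τ∘τ = −id` otherwise
    ((∀ x : W, τ (τ x) = x) ↔ (4 : ℤ) ∣ ((p : ℤ) - (q : ℤ))) ∧
    (¬ ((4 : ℤ) ∣ ((p : ℤ) - (q : ℤ))) → ∀ x : W, τ (τ x) = -x) ∧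
    -- when `p − q ≡ 0 (mod 4)`, the Hermitian form `γ` has signature `(10,10)`
    ((4 : ℤ) ∣ ((p : ℤ) - (q : ℤ)) →
      ∃ P N : Submodule ℂ W, Module.finrank ℂ P = 10 ∧ Module.finrank ℂ N = 10 ∧
        (∀ x : W, x ∈ P → x ≠ 0 → 0 < (γ x x).re) ∧
        (∀ x : W, x ∈ N → x ≠ 0 → (γ x x).re < 0)) := by
  set Ωₗ := bilinOfMulEqSmul ν_ne_zero Ω hΩ
  set γₗ := sesqOfHermitian γ hγadd hγsmul hγherm
  have hΩb : ∀ s t, Ωₗ (wedgeBasis s) (wedgeBasis t) =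
      if t = tripleCompl s then ((wedgeSign s : ℤ) : ℂ) else 0 := pairing_wedgeBasis hΩ
  have hγb : ∀ s t, γₗ (wedgeBasis s) (wedgeBasis t) =
      if s = t then ((tripleSign p s : ℤ) : ℂ) else 0 := gram_wedgeBasis hγdet
  set τₗ := antilinearOfPairing Ωₗ (flip_injective_of_pairing_wedgeBasis hΩb) γₗ Complex.I
    Complex.I_ne_zero τ hτ
  have hττ : ∀ x, τ (τ x) = ((-1 : ℂ) ^ (q + 1)) • x :=
    apply_apply_of_pairing (τ := τₗ) hpq hΩb hγb hτ
  have hdvd : (4 : ℤ) ∣ (p : ℤ) - q ↔ Odd q := by rw [Nat.odd_iff]; omega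
  refine ⟨⟨τₗ.map_add, τₗ.map_smulₛₗ⟩, ⟨fun hid => ?_, fun hq x => ?_⟩, fun hq x => ?_,
    fun hq => exists_signature_ten_ten hpq (hdvd.1 hq) γₗ hγb⟩
  · by_contra hq
    let s : powersetCard (Fin 6) 3 := ofFinEmb 3 (Fin 6) (Fin.castLEEmb (by norm_num))
    have := hττ (wedgeBasis s)
    rw [hid, (Nat.not_odd_iff_even.1 (hdvd.not.1 hq)).add_one.neg_one_pow] at this
    have hsmul : (1 : ℂ) • wedgeBasis s = (-1 : ℂ) • wedgeBasis s := (one_smul ℂ _).trans this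
    exact absurd (smul_left_injective ℂ (wedgeBasis.ne_zero s) hsmul) (by norm_num)
  · rw [hττ, (hdvd.1 hq).add_one.neg_one_pow, one_smul]
  · rw [hττ, (Nat.not_odd_iff_even.1 (hdvd.not.1 hq)).add_one.neg_one_pow]
    exact neg_one_smul ℂ x
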